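/- Let n ≥ 3 and let A be a real symmetric n×n matrix with trace(A) = 0. Then trace(A³) = -((n-2)/√(n(n-1))) · ‖A‖³ holds if and only if there exists λ ≥ 0 such that A has eigenvalue λ with multiplicity n-1 and eigenvalue -(n-1)λ with multiplicity 1; equivalently, A is orthogonally diagonalizable with n-1 diagonal entries equal to λ and one equal to -(n-1)λ. -/

import Mathlib

/-!
Diagonalize `A` orthogonally, with eigenvalues `μ i` summing to `0`, and write
`∑ μ i ^ 2 = n (n - 1) t ^ 2` with `t ≥ 0`. Then
`∑ (μ i - t) ^ 2 (μ i + (n - 1) t) = ∑ μ i ^ 3 + n (n - 1) (n - 2) t ^ 3`, and every factor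
`μ i + (n - 1) t` is nonnegative, since Cauchy–Schwarz for the other `n - 1` eigenvalues gives
`μ i ^ 2 ≤ (n - 1) ^ 2 t ^ 2`. So equality forces each `μ i` to be `t` or `-(n - 1) t`, and
`∑ μ i = 0` leaves exactly one eigenvalue equal to `-(n - 1) t`.
-/

open Finset Matrix

lemma div_sqrt_mul_sqrt_mul_pow_three {x : ℝ} (hx : 0 ≤ x) (a t : ℝ) :
    a / √x * (√x * t) ^ 3 = a * x * t ^ 3 := by
  rcases hx.eq_or_lt with rfl | hx
  · simp
  have hcube : √x ^ 3 = x * √x := by rw [pow_succ, Real.sq_sqrt hx.le]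
  rw [mul_pow, hcube]
  field_simp [(Real.sqrt_pos.mpr hx).ne']

section Okumura

variable {ι : Type*} [Fintype ι]

lemma card_mul_sq_le_of_sum_eq_zero {μ : ι → ℝ} (h0 : ∑ i, μ i = 0) (i : ι) :
    (Fintype.card ι : ℝ) * μ i ^ 2 ≤ (Fintype.card ι - 1) * ∑ j, μ j ^ 2 := by
  classical
  have hcs := sq_sum_le_card_mul_sum_sq (s := univ.erase i) (f := μ)
  rw [sum_erase_eq_sub (mem_univ i), sum_erase_eq_sub (mem_univ i), h0,
    cast_card_erase_of_mem (mem_univ i), card_univ] at hcs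
  nlinarith

lemma sum_sq_sub_mul_add_eq {μ : ι → ℝ} {t : ℝ} (h0 : ∑ i, μ i = 0)
    (h2 : ∑ i, μ i ^ 2 = Fintype.card ι * (Fintype.card ι - 1) * t ^ 2) :
    ∑ i, (μ i - t) ^ 2 * (μ i + (Fintype.card ι - 1) * t) =
      ∑ i, μ i ^ 3 + Fintype.card ι * (Fintype.card ι - 1) * (Fintype.card ι - 2) * t ^ 3 := by
  set N : ℝ := (Fintype.card ι : ℝ)
  have hexpand : ∀ i, (μ i - t) ^ 2 * (μ i + (N - 1) * t) =
      μ i ^ 3 + (N - 3) * t * μ i ^ 2 + (3 - 2 * N) * t ^ 2 * μ i + (N - 1) * t ^ 3 :=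
    fun i => by ring
  simp only [hexpand, sum_add_distrib, ← mul_sum, h0, h2, sum_const, card_univ, nsmul_eq_mul]
  ring

lemma sum_ite_eq_add_card_sub_one_mul [DecidableEq ι] (j : ι) (x y : ℝ) :
    ∑ i, (if i = j then x else y) = x + (Fintype.card ι - 1) * y := by
  rw [← add_sum_erase _ _ (mem_univ j), if_pos rfl,
    sum_congr rfl fun i hi => if_neg (ne_of_mem_erase hi), sum_const,
    nsmul_eq_mul, cast_card_erase_of_mem (mem_univ j), card_univ]

lemma exists_eq_ite_of_forall_eq_or_eq [DecidableEq ι] [Nonempty ι] {μ : ι → ℝ} {t : ℝ}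
    (ht : 0 ≤ t) (h0 : ∑ i, μ i = 0)
    (hμ : ∀ i, μ i = t ∨ μ i = -(Fintype.card ι - 1) * t) :
    ∃ j, μ = fun i => if i = j then -(Fintype.card ι - 1) * t else t := by
  have hN : (1 : ℝ) ≤ Fintype.card ι := by exact_mod_cast Fintype.card_pos
  obtain ⟨j, hj⟩ : ∃ j, μ j = -(Fintype.card ι - 1) * t := by
    by_contra! h
    have hall : ∀ i, μ i = t := fun i => (hμ i).resolve_right (h i)
    have ht0 : t = 0 := by
      simp only [hall, sum_const, card_univ, nsmul_eq_mul] at h0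
      nlinarith
    obtain ⟨i⟩ := ‹Nonempty ι›
    exact h i (by simp [hall i, ht0])
  refine ⟨j, funext fun i => ?_⟩
  split_ifs with hij
  · rw [hij, hj]
  have hle : ∀ k ∈ univ.erase j, μ k ≤ t := fun k _ => (hμ k).elim le_of_eq fun h => by
    rw [h]; nlinarith
  have hrest : ∑ k ∈ univ.erase j, μ k = ∑ k ∈ univ.erase j, t := by
    rw [sum_erase_eq_sub (mem_univ j), h0, hj, sum_const, nsmul_eq_mul,
      cast_card_erase_of_mem (mem_univ j), card_univ]
    ring
  exact (sum_eq_sum_iff_of_le hle).mp hrest i (mem_erase.mpr ⟨hij, mem_univ i⟩)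

lemma exists_eq_ite_of_sum_pow_three_eq [DecidableEq ι] (hN : 2 ≤ Fintype.card ι) {μ : ι → ℝ}
    (h0 : ∑ i, μ i = 0)
    (h3 : ∑ i, μ i ^ 3 = -((Fintype.card ι - 2) / √(Fintype.card ι * (Fintype.card ι - 1))) *
      √(∑ i, μ i ^ 2) ^ 3) :
    ∃ t : ℝ, 0 ≤ t ∧ ∃ j, μ = fun i => if i = j then -(Fintype.card ι - 1) * t else t := by
  obtain hN : (2 : ℝ) ≤ Fintype.card ι := by exact_mod_cast hN
  set N : ℝ := (Fintype.card ι : ℝ)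
  have hc : 0 < √(N * (N - 1)) := Real.sqrt_pos.mpr (by nlinarith)
  set t := √(∑ i, μ i ^ 2) / √(N * (N - 1))
  have ht : 0 ≤ t := div_nonneg (Real.sqrt_nonneg _) hc.le
  have hs : √(∑ i, μ i ^ 2) = √(N * (N - 1)) * t :=
    (mul_div_cancel₀ _ hc.ne').symm
  have h2 : ∑ i, μ i ^ 2 = N * (N - 1) * t ^ 2 := by
    rw [← Real.sq_sqrt (sum_nonneg fun i _ => sq_nonneg (μ i)), hs, mul_pow,
      Real.sq_sqrt (by nlinarith)]
  rw [hs, neg_mul, div_sqrt_mul_sqrt_mul_pow_three (by nlinarith)] at h3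
  have hlow : ∀ i, 0 ≤ μ i + (N - 1) * t := fun i => by
    have := card_mul_sq_le_of_sum_eq_zero h0 i
    rw [h2] at this
    have hsq : μ i ^ 2 ≤ ((N - 1) * t) ^ 2 := by nlinarith
    linarith [(abs_le_of_sq_le_sq' hsq (by nlinarith)).1]
  have hterms := (sum_eq_zero_iff_of_nonneg fun i _ => mul_nonneg (sq_nonneg _) (hlow i)).mp
    (by rw [sum_sq_sub_mul_add_eq h0 h2, h3]; ring)
  have : Nonempty ι := Fintype.card_pos_iff.mp (by omega)
  refine ⟨t, ht, exists_eq_ite_of_forall_eq_or_eq ht h0 fun i => ?_⟩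
  rcases mul_eq_zero.mp (hterms i (mem_univ i)) with h | h
  · exact .inl (sub_eq_zero.mp (pow_eq_zero_iff two_ne_zero |>.mp h))
  · exact .inr (by linarith)

lemma sum_pow_three_eq_of_eq_ite [DecidableEq ι] (hN : 2 ≤ Fintype.card ι) {t : ℝ} (ht : 0 ≤ t)
    (j : ι) :
    ∑ i, (if i = j then -(Fintype.card ι - 1) * t else t) ^ 3 =
      -((Fintype.card ι - 2) / √(Fintype.card ι * (Fintype.card ι - 1))) *
        √(∑ i, (if i = j then -(Fintype.card ι - 1) * t else t) ^ 2) ^ 3 := by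
  obtain hN : (2 : ℝ) ≤ Fintype.card ι := by exact_mod_cast hN
  set N : ℝ := (Fintype.card ι : ℝ)
  have h2 : ∑ i, (if i = j then -(N - 1) * t else t) ^ 2 = N * (N - 1) * t ^ 2 := by
    simp only [apply_ite (· ^ 2), sum_ite_eq_add_card_sub_one_mul]
    ring
  rw [h2, Real.sqrt_mul' _ (sq_nonneg t), Real.sqrt_sq ht, neg_mul (_ / _),
    div_sqrt_mul_sqrt_mul_pow_three (by nlinarith)]
  simp only [apply_ite (· ^ 3), sum_ite_eq_add_card_sub_one_mul]
  ring

theorem sum_pow_three_eq_iff_exists_eq_ite [DecidableEq ι] (hN : 2 ≤ Fintype.card ι)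
    {μ : ι → ℝ} (h0 : ∑ i, μ i = 0) :
    ∑ i, μ i ^ 3 = -((Fintype.card ι - 2) / √(Fintype.card ι * (Fintype.card ι - 1))) *
      √(∑ i, μ i ^ 2) ^ 3 ↔
    ∃ t : ℝ, 0 ≤ t ∧ ∃ j, μ = fun i => if i = j then -(Fintype.card ι - 1) * t else t := by
  refine ⟨exists_eq_ite_of_sum_pow_three_eq hN h0, ?_⟩
  rintro ⟨t, ht, j, rfl⟩
  exact sum_pow_three_eq_of_eq_ite hN ht j

lemma Matrix.trace_pow_mul_diagonal_mul {R : Type*} [DecidableEq ι] [CommRing R]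
    {P Q : Matrix ι ι R} (hPQ : P * Q = 1) (d : ι → R) (k : ℕ) :
    trace ((P * diagonal d * Q) ^ k) = ∑ i, d i ^ k := by
  have hQP : Q * P = 1 := mul_eq_one_comm.mp hPQ
  rw [show (P * diagonal d * Q) ^ k = P * diagonal d ^ k * Q from
      Units.conj_pow ⟨P, Q, hPQ, hQP⟩ (diagonal d) k,
    trace_mul_cycle, hQP, one_mul, diagonal_pow, trace_diagonal]
  rfl

theorem Matrix.trace_mul_mul_eq_iff_exists_eq_ite [DecidableEq ι] (hN : 2 ≤ Fintype.card ι)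
    {A P : Matrix ι ι ℝ} {d : ι → ℝ} (hP : P * Pᵀ = 1)
    (hAd : A = P * diagonal d * Pᵀ) (htr : A.trace = 0) :
    trace (A * A * A) = -((Fintype.card ι - 2) / √(Fintype.card ι * (Fintype.card ι - 1))) *
      √(trace (A * A)) ^ 3 ↔
    ∃ t : ℝ, 0 ≤ t ∧ ∃ j, d = fun i => if i = j then -(Fintype.card ι - 1) * t else t := by
  have htrace := fun k => hAd ▸ trace_pow_mul_diagonal_mul hP d k
  have h0 : ∑ i, d i = 0 := by simpa only [pow_one, htr] using (htrace 1).symm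
  rw [← pow_three', ← sq, htrace, htrace]
  exact sum_pow_three_eq_iff_exists_eq_ite hN h0

end Okumura

/-- Equality case of the Okumura inequality: for a trace-free real symmetric `n × n` matrix `A`
(`n ≥ 3`), `trace(A³) = -((n-2)/√(n(n-1))) · ‖A‖³` (with `‖A‖ = √(trace(A²))` the Frobenius
norm) if and only if there exists `λ ≥ 0` such that `A` is orthogonally diagonalizable with
`n-1` diagonal entries equal to `λ` and one equal to `-(n-1)λ`. -/
theorem okumura_equality_case {n : ℕ} (hn : 3 ≤ n) (A : Matrix (Fin n) (Fin n) ℝ)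
    (hA : A.IsSymm) (htr : A.trace = 0) :
    Matrix.trace (A * A * A) =
      -(((n : ℝ) - 2) / Real.sqrt ((n : ℝ) * ((n : ℝ) - 1))) *
        (Real.sqrt (Matrix.trace (A * A))) ^ 3 ↔
    ∃ lam : ℝ, 0 ≤ lam ∧ ∃ P : Matrix (Fin n) (Fin n) ℝ, P * P.transpose = 1 ∧ ∃ j : Fin n,
      A = P * Matrix.diagonal (fun i => if i = j then -((n : ℝ) - 1) * lam else lam) * P.transpose := by
  have hN : 2 ≤ Fintype.card (Fin n) := by rw [Fintype.card_fin]; omega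
  have hcard : (Fintype.card (Fin n) : ℝ) = n := by rw [Fintype.card_fin]
  rw [← hcard]
  have hA' : A.IsHermitian := isHermitian_iff_isSymm.mpr hA
  set U : Matrix (Fin n) (Fin n) ℝ := ↑hA'.eigenvectorUnitary
  have hU : U * Uᵀ = 1 := mem_unitaryGroup_iff.mp hA'.eigenvectorUnitary.2
  have hspec : A = U * diagonal hA'.eigenvalues * Uᵀ := hA'.spectral_theorem
  constructor
  · intro h
    obtain ⟨lam, hlam, j, hμ⟩ := (trace_mul_mul_eq_iff_exists_eq_ite hN hU hspec htr).mp h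
    exact ⟨lam, hlam, U, hU, j, hμ ▸ hspec⟩
  · rintro ⟨lam, hlam, P, hP, j, hAP⟩
    exact (trace_mul_mul_eq_iff_exists_eq_ite hN hP hAP htr).mpr ⟨lam, hlam, j, rfl⟩
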